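/- The N.6 bracket table satisfies the Jacobi identity, and the resulting 6-dimensional complex Lie algebra is isomorphic to the semidirect product sl(2,ℂ) ⋉ heis₃, namely the 6-dimensional complex Lie algebra with basis H, X, Y, S, T, U and nonzero brackets [H,X]=2X, [H,Y]=-2Y, [X,Y]=H, [H,S]=S, [H,T]=-T, [X,T]=S, [Y,S]=T, [S,T]=U (U central). -/

import Mathlib

set_option maxHeartbeats 1000000

noncomputable def n6c : Fin 6 → Fin 6 → Fin 6 → ℂ :=
  ![![![0, 0, 0, 0, 0, 0],
     ![0, 0, 1, 0, 0, 0],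
     ![(-2), 0, 0, 0, 0, 0],
     ![0, 0, 0, 0, 0, 0],
     ![1, 0, 0, 0, 0, (-1)],
     ![0, 0, 0, 0, 0, 0]],
   ![![0, 0, (-1), 0, 0, 0],
     ![0, 0, 0, 0, 0, 0],
     ![(-18), 2, 0, (-2), 0, 0],
     ![0, 0, (-12), 0, 3, 0],
     ![(-42), (-2), 0, 6, 0, 0],
     ![0, 0, 0, 0, (-1), 0]],
   ![![2, 0, 0, 0, 0, 0],
     ![18, (-2), 0, 2, 0, 0],
     ![0, 0, 0, 0, 0, 0],
     ![27, 0, 0, 0, 0, (-3)],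
     ![0, 0, (-1), 0, (-1), 0],
     ![(-1), 0, 0, 0, 0, 1]],
   ![![0, 0, 0, 0, 0, 0],
     ![0, 0, 12, 0, (-3), 0],
     ![(-27), 0, 0, 0, 0, 3],
     ![0, 0, 0, 0, 0, 0],
     ![(-60), 0, 0, 6, 0, 0],
     ![0, 0, 0, 0, 0, 0]],
   ![![(-1), 0, 0, 0, 0, 1],
     ![42, 2, 0, (-6), 0, 0],
     ![0, 0, 1, 0, 1, 0],
     ![60, 0, 0, (-6), 0, 0],
     ![0, 0, 0, 0, 0, 0],
     ![(-24), 0, 0, 2, 0, 4]],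
   ![![0, 0, 0, 0, 0, 0],
     ![0, 0, 0, 0, 1, 0],
     ![1, 0, 0, 0, 0, (-1)],
     ![0, 0, 0, 0, 0, 0],
     ![24, 0, 0, (-2), 0, (-4)],
     ![0, 0, 0, 0, 0, 0]]]

noncomputable def n6br (x y : Fin 6 → ℂ) : Fin 6 → ℂ :=
  fun k => ∑ i : Fin 6, ∑ j : Fin 6, x i * y j * n6c i j k

/-! The Jacobi identity for the table is a polynomial identity in the coordinates of `x, y, z`,
checked by `ring` once the bracket is written out.

For the isomorphism, `X2, N, 2N + X1 - X3 - X5` form an sl₂-triple `h, e, f` in the N.6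
algebra, and `-N - X5, X2 + X4, -24N + 2X3 + 6X5` span a Heisenberg ideal on which the triple acts
as it acts on `S, T, U`. The linear map sending `H, X, Y, S, T, U` to these six vectors is
therefore a Lie isomorphism; by bilinearity and antisymmetry its inverse only has to be checked to
preserve brackets of pairs `i < j` of basis vectors. -/

theorem n6br_eq (x y : Fin 6 → ℂ) : n6br x y =
    ![-2 * x 0 * y 2 + x 0 * y 4 - 18 * x 1 * y 2 - 42 * x 1 * y 4 + 2 * x 2 * y 0 + 18 * x 2 * y 1
        + 27 * x 2 * y 3 - x 2 * y 5 - 27 * x 3 * y 2 - 60 * x 3 * y 4 - x 4 * y 0 + 42 * x 4 * y 1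
        + 60 * x 4 * y 3 - 24 * x 4 * y 5 + x 5 * y 2 + 24 * x 5 * y 4,
      2 * x 1 * y 2 - 2 * x 1 * y 4 - 2 * x 2 * y 1 + 2 * x 4 * y 1,
      x 0 * y 1 - x 1 * y 0 - 12 * x 1 * y 3 - x 2 * y 4 + 12 * x 3 * y 1 + x 4 * y 2,
      -2 * x 1 * y 2 + 6 * x 1 * y 4 + 2 * x 2 * y 1 + 6 * x 3 * y 4 - 6 * x 4 * y 1 - 6 * x 4 * y 3
        + 2 * x 4 * y 5 - 2 * x 5 * y 4,
      3 * x 1 * y 3 - x 1 * y 5 - x 2 * y 4 - 3 * x 3 * y 1 + x 4 * y 2 + x 5 * y 1,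
      -x 0 * y 4 - 3 * x 2 * y 3 + x 2 * y 5 + 3 * x 3 * y 2 + x 4 * y 0 + 4 * x 4 * y 5 - x 5 * y 2
        - 4 * x 5 * y 4] := by
  funext k
  fin_cases k <;>
    simp only [n6br, n6c, Fin.sum_univ_six, Fin.zero_eta, Fin.mk_one, Fin.reduceFinMk, Fin.isValue,
      Matrix.cons_val', Matrix.cons_val_fin_one, Matrix.cons_val_zero, Matrix.cons_val_one,
      Matrix.cons_val] <;>
    ring

theorem n6br_jacobi (x y z : Fin 6 → ℂ) :
    n6br x (n6br y z) + n6br y (n6br z x) + n6br z (n6br x y) = 0 := by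
  funext k
  fin_cases k <;>
    simp only [n6br_eq, Pi.add_apply, Pi.zero_apply, Fin.zero_eta, Fin.mk_one, Fin.reduceFinMk,
      Fin.isValue, Matrix.cons_val_zero, Matrix.cons_val_one, Matrix.cons_val] <;>
    ring

theorem exists_linearMap_apply_eq {R M M' ι : Type*} [CommRing R] [AddCommGroup M] [Module R M]
    [AddCommGroup M'] [Module R M'] {e : ι → M} (hli : LinearIndependent R e)
    (hsp : Submodule.span R (Set.range e) = ⊤) (v : ι → M') :
    ∃ f : M →ₗ[R] M', ∀ i, f (e i) = v i :=
  ⟨(Module.Basis.mk hli hsp.ge).constr R v,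
    fun i => by simpa using (Module.Basis.mk hli hsp.ge).constr_basis R v i⟩

section

variable {R L L' : Type*} [CommRing R] [LieRing L] [LieAlgebra R L] [LieRing L'] [LieAlgebra R L']

theorem lie_swap_of_lie_eq {x y z : L} (h : ⁅x, y⁆ = z) : ⁅y, x⁆ = -z := by
  rw [← h, lie_skew]

theorem LinearMap.map_lie_of_span_eq_top {ι : Type*} [LinearOrder ι] {e : ι → L}
    (he : Submodule.span R (Set.range e) = ⊤) (f : L →ₗ[R] L')
    (hf : ∀ i j, i < j → f ⁅e i, e j⁆ = ⁅f (e i), f (e j)⁆) (x y : L) :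
    f ⁅x, y⁆ = ⁅f x, f y⁆ := by
  have hbilin : (LieModule.toEnd R L L : L →ₗ[R] Module.End R L).compr₂ f =
      (LieModule.toEnd R L' L' : L' →ₗ[R] Module.End R L').compl₁₂ f f := by
    refine LinearMap.ext_on_range he fun i => LinearMap.ext_on_range he fun j => ?_
    show f ⁅e i, e j⁆ = ⁅f (e i), f (e j)⁆
    rcases lt_trichotomy i j with hij | rfl | hji
    · exact hf i j hij
    · simp only [lie_self, map_zero]
    · rw [← lie_skew, map_neg, hf j i hji, lie_skew]
  exact LinearMap.congr_fun₂ hbilin x y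

theorem nonempty_lieEquiv_of_span_eq_top {ι ι' : Type*} [LinearOrder ι] {e : ι → L}
    {e' : ι' → L'} (he : Submodule.span R (Set.range e) = ⊤)
    (he' : Submodule.span R (Set.range e') = ⊤) (f : L →ₗ[R] L') (g : L' →ₗ[R] L)
    (hf : ∀ i j, i < j → f ⁅e i, e j⁆ = ⁅f (e i), f (e j)⁆)
    (hgf : ∀ i, g (f (e i)) = e i) (hfg : ∀ i, f (g (e' i)) = e' i) :
    Nonempty (L ≃ₗ⁅R⁆ L') := by
  have hgf' : g ∘ₗ f = LinearMap.id := LinearMap.ext_on_range he hgf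
  have hfg' : f ∘ₗ g = LinearMap.id := LinearMap.ext_on_range he' hfg
  exact ⟨{ f with
    map_lie' := f.map_lie_of_span_eq_top he hf _ _
    invFun := g
    left_inv := LinearMap.congr_fun hgf'
    right_inv := LinearMap.congr_fun hfg' }⟩

end

theorem N6_table_is_sl2_semidirect_heis3
    {F : Type*} [LieRing F] [LieAlgebra ℂ F]
    (N X1 X2 X3 X4 X5 : F)
    (hbindep : LinearIndependent ℂ ![N, X1, X2, X3, X4, X5])
    (hbspan : Submodule.span ℂ (Set.range ![N, X1, X2, X3, X4, X5]) = ⊤)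
    (hb01 : ⁅N, X1⁆ = X2)
    (hb02 : ⁅N, X2⁆ = (-2 : ℂ) • N)
    (hb03 : ⁅N, X3⁆ = 0)
    (hb04 : ⁅N, X4⁆ = N + -X5)
    (hb05 : ⁅N, X5⁆ = 0)
    (hb12 : ⁅X1, X2⁆ = (-18 : ℂ) • N + (2 : ℂ) • X1 + (-2 : ℂ) • X3)
    (hb13 : ⁅X1, X3⁆ = (-12 : ℂ) • X2 + (3 : ℂ) • X4)
    (hb14 : ⁅X1, X4⁆ = (-42 : ℂ) • N + (-2 : ℂ) • X1 + (6 : ℂ) • X3)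
    (hb15 : ⁅X1, X5⁆ = -X4)
    (hb23 : ⁅X2, X3⁆ = (27 : ℂ) • N + (-3 : ℂ) • X5)
    (hb24 : ⁅X2, X4⁆ = -X2 + -X4)
    (hb25 : ⁅X2, X5⁆ = -N + X5)
    (hb34 : ⁅X3, X4⁆ = (-60 : ℂ) • N + (6 : ℂ) • X3)
    (hb35 : ⁅X3, X5⁆ = 0)
    (hb45 : ⁅X4, X5⁆ = (-24 : ℂ) • N + (2 : ℂ) • X3 + (4 : ℂ) • X5)
    {G : Type*} [LieRing G] [LieAlgebra ℂ G]
    (H X Y S T U : G)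
    (hgindep : LinearIndependent ℂ ![H, X, Y, S, T, U])
    (hgspan : Submodule.span ℂ (Set.range ![H, X, Y, S, T, U]) = ⊤)
    (hg01 : ⁅H, X⁆ = (2 : ℂ) • X)
    (hg02 : ⁅H, Y⁆ = (-2 : ℂ) • Y)
    (hg03 : ⁅H, S⁆ = S)
    (hg04 : ⁅H, T⁆ = -T)
    (hg05 : ⁅H, U⁆ = 0)
    (hg12 : ⁅X, Y⁆ = H)
    (hg13 : ⁅X, S⁆ = 0)
    (hg14 : ⁅X, T⁆ = S)
    (hg15 : ⁅X, U⁆ = 0)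
    (hg23 : ⁅Y, S⁆ = T)
    (hg24 : ⁅Y, T⁆ = 0)
    (hg25 : ⁅Y, U⁆ = 0)
    (hg34 : ⁅S, T⁆ = U)
    (hg35 : ⁅S, U⁆ = 0)
    (hg45 : ⁅T, U⁆ = 0) :
    (∀ x y z : Fin 6 → ℂ,
      n6br x (n6br y z) + n6br y (n6br z x) + n6br z (n6br x y) = 0) ∧
    Nonempty (F ≃ₗ⁅ℂ⁆ G) := by
  refine ⟨n6br_jacobi, ?_⟩
  obtain ⟨f, hf⟩ := exists_linearMap_apply_eq hbindep hbspan
    ![X, (12 : ℂ) • X + Y + (2 : ℂ) • S + (1 / 2 : ℂ) • U, H,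
      (15 : ℂ) • X + (3 : ℂ) • S + (1 / 2 : ℂ) • U, -H + T, -X - S]
  obtain ⟨g, hg⟩ := exists_linearMap_apply_eq hgindep hgspan
    ![X2, N, (2 : ℂ) • N + X1 - X3 - X5, -N - X5, X2 + X4,
      (-24 : ℂ) • N + (2 : ℂ) • X3 + (6 : ℂ) • X5]
  simp only [Fin.forall_fin_succ, Matrix.cons_val_zero, Matrix.cons_val_succ, IsEmpty.forall_iff,
    and_true] at hf hg
  refine nonempty_lieEquiv_of_span_eq_top hbspan hgspan f g ?_ ?_ ?_
  · intro i j hij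
    fin_cases i <;> fin_cases j <;> (try exact absurd hij (by decide)) <;>
      simp only [Fin.zero_eta, Fin.mk_one, Fin.reduceFinMk, Fin.isValue, Matrix.cons_val_zero,
        Matrix.cons_val_one, Matrix.cons_val, hf, hb01, hb02, hb03, hb04, hb05, hb12, hb13, hb14,
        hb15, hb23, hb24, hb25, hb34, hb35, hb45, map_add, map_neg, map_smul, map_zero, lie_add,
        add_lie, lie_sub, lie_neg, neg_lie, lie_smul, smul_lie, lie_self, hg01, hg03, hg04, hg05,
        hg12, hg13, hg14, hg15, hg23, hg24, hg25, hg34, hg35, lie_swap_of_lie_eq hg01,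
        lie_swap_of_lie_eq hg02, lie_swap_of_lie_eq hg03, lie_swap_of_lie_eq hg05,
        lie_swap_of_lie_eq hg12, lie_swap_of_lie_eq hg13, lie_swap_of_lie_eq hg14,
        lie_swap_of_lie_eq hg15, lie_swap_of_lie_eq hg34, lie_swap_of_lie_eq hg35,
        lie_swap_of_lie_eq hg45] <;>
      module
  all_goals
    intro i
    fin_cases i <;>
      simp only [Fin.zero_eta, Fin.mk_one, Fin.reduceFinMk, Fin.isValue, Matrix.cons_val_zero,
        Matrix.cons_val_one, Matrix.cons_val, map_add, map_sub, map_neg, map_smul, hf, hg] <;>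
      module
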